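/- arXiv:2602.11568 — 5 statements merged into one kernel-verified Lean document; each statement's English description precedes it below -/
import Mathlib

section
/- Let (N, P_S) be the Z0/Z1 channel and N^{CSIR} its associated channel with CSIR. Then η^{NS,ca}_{opt,M=2,n=2}(N^{CSIR}, P_S) ≥ η^{C,ca}_{opt,M=2,n=2}(N^{CSIR}, P_S) ≥ 7/8, and η^{NS,ca}_{opt,M=2,n=2}(N, P_S) ≤ 13/16. -/
open scoped Classical BigOperators
open Finset Filter

noncomputable section

def IsPMF {S : Type*} [Fintype S] (P : S → ℝ) : Prop :=
  (∀ s, 0 ≤ P s) ∧ ∑ s, P s = 1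

def IsChannel {X Y S : Type*} [Fintype Y] (N : Y → X → S → ℝ) : Prop :=
  (∀ y x s, 0 ≤ N y x s) ∧ ∀ x s, ∑ y, N y x s = 1

def IsCondPMF {X S : Type*} [Fintype X] (PXS : X → S → ℝ) : Prop :=
  (∀ x s, 0 ≤ PXS x s) ∧ ∀ s, ∑ x, PXS x s = 1

def prodP {S : Type*} (P : S → ℝ) {n : ℕ} (s : Fin n → S) : ℝ := ∏ i, P (s i)

def prodN {X Y S : Type*} (N : Y → X → S → ℝ) {n : ℕ}
    (y : Fin n → Y) (x : Fin n → X) (s : Fin n → S) : ℝ :=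
  ∏ i, N (y i) (x i) (s i)

/-- NS-assisted coding scheme with causal CSIT: nonnegativity, normalization,
and the conditions C1, C2, C3. -/
def IsNSCa {X Y S : Type*} [Fintype X] [Fintype Y] [Fintype S] (M n : ℕ)
    (Z : (Fin n → X) → Fin M → Fin M → (Fin n → S) → (Fin n → Y) → ℝ) : Prop :=
  (∀ x wh w s y, 0 ≤ Z x wh w s y) ∧
  (∀ w s y, ∑ x, ∑ wh, Z x wh w s y = 1) ∧
  (∀ x w s y y', ∑ wh, Z x wh w s y = ∑ wh, Z x wh w s y') ∧
  (∀ wh w w' s s' y, ∑ x, Z x wh w s y = ∑ x, Z x wh w' s' y) ∧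
  (∀ i : ℕ, 1 ≤ i → i < n →
    ∀ (x : Fin n → X) wh w s s' y, (∀ j : Fin n, (j : ℕ) < i → s j = s' j) →
      ∑ x' ∈ univ.filter (fun x' : Fin n → X => ∀ j : Fin n, (j : ℕ) < i → x' j = x j),
        Z x' wh w s y =
      ∑ x' ∈ univ.filter (fun x' : Fin n → X => ∀ j : Fin n, (j : ℕ) < i → x' j = x j),
        Z x' wh w s' y)

def etaNS {X Y S : Type*} [Fintype X] [Fintype Y] [Fintype S]
    (N : Y → X → S → ℝ) (P : S → ℝ) (M n : ℕ)
    (Z : (Fin n → X) → Fin M → Fin M → (Fin n → S) → (Fin n → Y) → ℝ) : ℝ :=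
  (1 / (M : ℝ)) * ∑ w, ∑ x, ∑ s, ∑ y, prodP P s * prodN N y x s * Z x w w s y

def etaNSOpt {X Y S : Type*} [Fintype X] [Fintype Y] [Fintype S]
    (N : Y → X → S → ℝ) (P : S → ℝ) (M n : ℕ) : ℝ :=
  sSup {e : ℝ | ∃ Z : (Fin n → X) → Fin M → Fin M → (Fin n → S) → (Fin n → Y) → ℝ,
    IsNSCa M n Z ∧ etaNS N P M n Z = e}

/-- The length-`(j+1)` prefix `s^{j+1}` of a state sequence. -/
def prefixS {S : Type*} {n : ℕ} (s : Fin n → S) (j : Fin n) : Fin ((j : ℕ) + 1) → S :=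
  fun k => s ⟨k, Nat.lt_of_le_of_lt (Nat.le_of_lt_succ k.isLt) j.isLt⟩

/-- A classical coding scheme with causal CSIT. -/
structure ClassicalCa (X S Y : Type*) [Fintype X] (M n : ℕ) where
  Q : Type
  fq : Fintype Q
  PQ : Q → ℝ
  E : (j : Fin n) → X → (Fin (j : ℕ) → X) → Fin M → (Fin ((j : ℕ) + 1) → S) → Q → ℝ
  D : Fin M → (Fin n → Y) → Q → ℝ
  PQ_nonneg : ∀ q, 0 ≤ PQ q
  PQ_sum : ∑ q ∈ @Finset.univ Q fq, PQ q = 1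
  E_nonneg : ∀ j xj h w sj q, 0 ≤ E j xj h w sj q
  E_sum : ∀ j h w sj q, ∑ xj, E j xj h w sj q = 1
  D_nonneg : ∀ wh y q, 0 ≤ D wh y q
  D_sum : ∀ y q, ∑ wh, D wh y q = 1

def etaC {X Y S : Type*} [Fintype X] [Fintype Y] [Fintype S]
    (N : Y → X → S → ℝ) (P : S → ℝ) (M n : ℕ) (C : ClassicalCa X S Y M n) : ℝ :=
  (1 / (M : ℝ)) * ∑ w : Fin M, ∑ q ∈ @Finset.univ C.Q C.fq, C.PQ q *
    ∑ x : Fin n → X, ∑ s : Fin n → S, ∑ y : Fin n → Y,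
      prodP P s *
      (∏ j, C.E j (x j) (fun k => x ⟨k, k.isLt.trans j.isLt⟩) w (prefixS s j) q) *
      prodN N y x s * C.D w y q

def etaCOpt {X Y S : Type*} [Fintype X] [Fintype Y] [Fintype S]
    (N : Y → X → S → ℝ) (P : S → ℝ) (M n : ℕ) : ℝ :=
  sSup {e : ℝ | ∃ C : ClassicalCa X S Y M n, etaC N P M n C = e}

/-- Conditional mutual information I(X;Y|S) for the joint distribution
P_{XYS}(x,y,s) = P_S(s) P_{X|S}(x|s) N(y|x,s), in bits. -/
def condMI {X Y S : Type*} [Fintype X] [Fintype Y] [Fintype S]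
    (N : Y → X → S → ℝ) (P : S → ℝ) (PXS : X → S → ℝ) : ℝ :=
  ∑ x, ∑ y, ∑ s,
    (P s * PXS x s * N y x s) *
      Real.logb 2 ((P s * PXS x s * N y x s) * P s /
        ((∑ y', P s * PXS x s * N y' x s) * (∑ x', P s * PXS x' s * N y x' s)))

/-- Transition function of the Z0/Z1 channel (arguments: output, input, state). -/
def NZ (y x s : Bool) : ℝ := if x = s then (if y = x then 1 else 0) else 1 / 2

/-- The uniform state distribution of the Z0/Z1 channel. -/
def PZ (_ : Bool) : ℝ := 1 / 2

/-- The channel with CSIR associated to a channel with state. -/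
def NCSIR {X Y S : Type*} (N : Y → X → S → ℝ) : (Y × S) → X → S → ℝ :=
  fun ys x s => if ys.2 = s then N ys.1 x s else 0


/-!
The classical half is a simulation: a classical code with causal CSIT, averaged over its common
randomness, is a non-signaling code with the same success probability (condition C3 holds because
the encoder at time 1 never sees `s₂`). With CSIR the code `x_j = s_j ⊕ w` succeeds with
probability `7/8`: for `w = 0` every output equals the state, for `w = 1` both outputs are uniform,
so the receiver, who sees the state, errs only when `w = 1` and both outputs equal the state.

The bound `13/16` is weak LP duality. The success probability is linear in `Z`, and only three
families of linear constraints are needed: `Z(x, w | w, s, y) ≤ Σ_ŵ Z(x, ŵ | w, s, y)`, whose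
right side is a probability distribution in `x` independent of `y` (C1); `Σ_w Σ_x Z(x, w | w, s, y)
= 1` (from C2); and the causality constraint C3 at time 1. An explicit dual feasible point for
these constraints has value `13/16`.
-/

lemma IsPMF.prodP_nonneg {S : Type*} [Fintype S] {P : S → ℝ} (hP : IsPMF P) {n : ℕ}
    (s : Fin n → S) : 0 ≤ prodP P s :=
  Finset.prod_nonneg fun _ _ => hP.1 _

lemma IsPMF.sum_prodP {S : Type*} [Fintype S] {P : S → ℝ} (hP : IsPMF P) (n : ℕ) :
    ∑ s : Fin n → S, prodP P s = 1 := by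
  simp [prodP, ← Fintype.prod_sum fun (_ : Fin n) s => P s, hP.2]

lemma IsChannel.prodN_nonneg {X Y S : Type*} [Fintype Y] {N : Y → X → S → ℝ} (hN : IsChannel N)
    {n : ℕ} (y : Fin n → Y) (x : Fin n → X) (s : Fin n → S) : 0 ≤ prodN N y x s :=
  Finset.prod_nonneg fun _ _ => hN.1 _ _ _

lemma IsChannel.sum_prodN {X Y S : Type*} [Fintype Y] {N : Y → X → S → ℝ} (hN : IsChannel N)
    {n : ℕ} (x : Fin n → X) (s : Fin n → S) : ∑ y, prodN N y x s = 1 := by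
  simp [prodN, ← Fintype.prod_sum fun i y => N y (x i) (s i), hN.2]

lemma IsChannel.csir {X Y S : Type*} [Fintype Y] [Fintype S] {N : Y → X → S → ℝ}
    (hN : IsChannel N) : IsChannel (NCSIR N) := by
  refine ⟨fun ys x s => ?_, fun x s => ?_⟩
  · unfold NCSIR; split_ifs <;> simp [hN.1]
  · simp [NCSIR, Fintype.sum_prod_type, hN.2]

lemma sum_fin_two_arrow {α : Type*} [Fintype α] (g : (Fin 2 → α) → ℝ) :
    ∑ x, g x = ∑ a, ∑ b, g ![a, b] := by
  rw [← (finTwoArrowEquiv α).symm.sum_comp, Fintype.sum_prod_type]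
  rfl

lemma sum_filter_fst_eq {α : Type*} [Fintype α] (g : (Fin 2 → α) → ℝ) (x₀ : Fin 2 → α) :
    ∑ x ∈ univ.filter (fun x : Fin 2 → α => ∀ j : Fin 2, (j : ℕ) < 1 → x j = x₀ j), g x
      = ∑ b, g ![x₀ 0, b] := by
  rw [Finset.sum_filter, sum_fin_two_arrow, Finset.sum_comm]
  simp

section NonSignaling

variable {X Y S : Type*} [Fintype X] [Fintype Y] [Fintype S] {M n : ℕ}
  {Z : (Fin n → X) → Fin M → Fin M → (Fin n → S) → (Fin n → Y) → ℝ}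

namespace IsNSCa

lemma sum_diag_eq_one (hZ : IsNSCa M n Z) (hM : 0 < M) (s : Fin n → S) (y : Fin n → Y) :
    ∑ w, ∑ x, Z x w w s y = 1 :=
  calc ∑ w, ∑ x, Z x w w s y = ∑ w, ∑ x, Z x w ⟨0, hM⟩ s y :=
        Finset.sum_congr rfl fun w _ => hZ.2.2.2.1 w w ⟨0, hM⟩ s s y
    _ = 1 := by rw [Finset.sum_comm, hZ.2.1 ⟨0, hM⟩ s y]

lemma sum_mul_diag_le [Nonempty Y] (hZ : IsNSCa M n Z)
    {ρ : (Fin n → Y) → (Fin n → X) → (Fin n → S) → ℝ} {μ : (Fin n → S) → ℝ}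
    (hρ : ∀ y x s, 0 ≤ ρ y x s) (hμ : ∀ x s, ∑ y, ρ y x s ≤ μ s) (w : Fin M) (s : Fin n → S) :
    ∑ x, ∑ y, ρ y x s * Z x w w s y ≤ μ s := by
  obtain ⟨hnn, hnorm, hC1, -, -⟩ := hZ
  obtain ⟨y₀⟩ := (inferInstance : Nonempty (Fin n → Y))
  set p : (Fin n → X) → ℝ := fun x => ∑ wh, Z x wh w s y₀
  have hZp : ∀ x y, Z x w w s y ≤ p x := fun x y =>
    (Finset.single_le_sum (fun wh _ => hnn x wh w s y) (Finset.mem_univ w)).trans_eq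
      (hC1 x w s y y₀)
  calc ∑ x, ∑ y, ρ y x s * Z x w w s y
      ≤ ∑ x, (∑ y, ρ y x s) * p x := by
        simp_rw [Finset.sum_mul]
        gcongr with x _ y _
        exacts [hρ y x s, hZp x y]
    _ ≤ ∑ x, μ s * p x := by
        gcongr with x _
        · exact Finset.sum_nonneg fun wh _ => hnn x wh w s y₀
        · exact hμ x s
    _ = μ s := by rw [← Finset.mul_sum, hnorm w s y₀, mul_one]

end IsNSCa

variable {N : Y → X → S → ℝ} {P : S → ℝ}

lemma etaNS_nonneg (hN : IsChannel N) (hP : IsPMF P) (hZ : IsNSCa M n Z) :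
    0 ≤ etaNS N P M n Z :=
  mul_nonneg (by positivity) <| Finset.sum_nonneg fun w _ => Finset.sum_nonneg fun x _ =>
    Finset.sum_nonneg fun s _ => Finset.sum_nonneg fun y _ =>
      mul_nonneg (mul_nonneg (hP.prodP_nonneg s) (hN.prodN_nonneg y x s)) (hZ.1 x w w s y)

lemma etaNS_le_one [Nonempty Y] (hN : IsChannel N) (hP : IsPMF P) (hZ : IsNSCa M n Z) :
    etaNS N P M n Z ≤ 1 := by
  rcases Nat.eq_zero_or_pos M with rfl | hM
  · simp [etaNS]
  have hbound := fun w s => hZ.sum_mul_diag_le (ρ := fun y x s => prodP P s * prodN N y x s)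
    (fun y x s => mul_nonneg (hP.prodP_nonneg s) (hN.prodN_nonneg y x s))
    (fun x s => by rw [← Finset.mul_sum, hN.sum_prodN, mul_one]) w s
  calc etaNS N P M n Z
      = (1 / (M : ℝ)) * ∑ w, ∑ s, ∑ x, ∑ y, prodP P s * prodN N y x s * Z x w w s y := by
        rw [etaNS]; simp_rw [Finset.sum_comm (γ := Fin n → X)]
    _ ≤ (1 / (M : ℝ)) * ∑ _w : Fin M, ∑ s, prodP P s := by gcongr with w _ s _; exact hbound w s
    _ = 1 := by simp [hP.sum_prodP, hM.ne']

lemma etaNS_le_etaNSOpt [Nonempty Y] (hN : IsChannel N) (hP : IsPMF P) (hZ : IsNSCa M n Z) :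
    etaNS N P M n Z ≤ etaNSOpt N P M n :=
  le_csSup ⟨1, by rintro _ ⟨Z', hZ', rfl⟩; exact etaNS_le_one hN hP hZ'⟩ ⟨Z, hZ, rfl⟩

end NonSignaling

section BlockLengthTwo

variable {X Y S : Type*} [Fintype X] [Fintype Y] [Fintype S] {M : ℕ}
  {Z : (Fin 2 → X) → Fin M → Fin M → (Fin 2 → S) → (Fin 2 → Y) → ℝ}

namespace IsNSCa

lemma sum_snd_eq (hZ : IsNSCa M 2 Z) (a : X) (wh w : Fin M) {s s' : Fin 2 → S}
    (hs : s 0 = s' 0) (y : Fin 2 → Y) : ∑ b, Z ![a, b] wh w s y = ∑ b, Z ![a, b] wh w s' y := by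
  have h := hZ.2.2.2.2 1 le_rfl one_lt_two ![a, a] wh w s s' y fun j hj => by
    obtain rfl : j = 0 := Fin.ext (by omega)
    exact hs
  simpa only [sum_filter_fst_eq, Matrix.cons_val_zero] using h

lemma sum_causal_mul_eq_zero (hZ : IsNSCa M 2 Z) {κ : X → S → S → ℝ}
    (hκ : ∀ a c, ∑ d, κ a c d = 0) (wh w : Fin M) (y : Fin 2 → Y) :
    ∑ x, ∑ s, κ (x 0) (s 0) (s 1) * Z x wh w s y = 0 := by
  set G : X → S → ℝ := fun a c => ∑ b, Z ![a, b] wh w (fun _ => c) y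
  calc ∑ x, ∑ s, κ (x 0) (s 0) (s 1) * Z x wh w s y
      = ∑ a, ∑ s : Fin 2 → S, κ a (s 0) (s 1) * ∑ b, Z ![a, b] wh w s y := by
        simp_rw [sum_fin_two_arrow (fun x => ∑ s, κ (x 0) (s 0) (s 1) * Z x wh w s y),
          Finset.mul_sum]
        exact Finset.sum_congr rfl fun a _ => Finset.sum_comm
    _ = ∑ a, ∑ s : Fin 2 → S, κ a (s 0) (s 1) * G a (s 0) := by
        refine Finset.sum_congr rfl fun a _ => Finset.sum_congr rfl fun s _ => ?_
        rw [hZ.sum_snd_eq a wh w (s' := fun _ => s 0) rfl]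
    _ = ∑ a, ∑ c, G a c * ∑ d, κ a c d := by
        simp_rw [sum_fin_two_arrow (fun s => κ _ (s 0) (s 1) * G _ (s 0)), Finset.mul_sum]
        simp [mul_comm]
    _ = 0 := by simp [hκ]

/-- Weak duality: `ρ` prices the constraint `Z(x, w | w, s, y) ≤ Σ_ŵ Z(x, ŵ | w, s, y)` (C1),
`ν` the normalisation `Σ_w Σ_x Z(x, w | w, s, y) = 1` (C2) and `κ` the causality constraint (C3). -/
theorem etaNS_le_of_dual [Nonempty Y] {N : Y → X → S → ℝ} {P : S → ℝ} (hZ : IsNSCa M 2 Z)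
    (hM : 0 < M) {ρ : (Fin 2 → Y) → (Fin 2 → X) → (Fin 2 → S) → ℝ} {μ : (Fin 2 → S) → ℝ}
    {ν : (Fin 2 → Y) → (Fin 2 → S) → ℝ} {κ : (Fin 2 → Y) → X → S → S → ℝ}
    (hρ : ∀ y x s, 0 ≤ ρ y x s) (hμ : ∀ x s, ∑ y, ρ y x s ≤ μ s)
    (hκ : ∀ y a c, ∑ d, κ y a c d = 0)
    (hdual : ∀ y x s, prodP P s * prodN N y x s ≤ ρ y x s + ν y s + κ y (x 0) (s 0) (s 1)) :
    etaNS N P M 2 Z ≤ ∑ s, μ s + (∑ y, ∑ s, ν y s) / M := by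
  have hcap : ∑ w, ∑ x, ∑ s, ∑ y, ρ y x s * Z x w w s y ≤ M * ∑ s, μ s :=
    calc ∑ w, ∑ x, ∑ s, ∑ y, ρ y x s * Z x w w s y
        = ∑ w, ∑ s, ∑ x, ∑ y, ρ y x s * Z x w w s y :=
          Finset.sum_congr rfl fun w _ => Finset.sum_comm
      _ ≤ ∑ _w : Fin M, ∑ s, μ s := by
          gcongr with w _ s _; exact hZ.sum_mul_diag_le hρ hμ w s
      _ = M * ∑ s, μ s := by simp
  have hnorm : ∑ w, ∑ x, ∑ s, ∑ y, ν y s * Z x w w s y = ∑ y, ∑ s, ν y s :=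
    calc ∑ w, ∑ x, ∑ s, ∑ y, ν y s * Z x w w s y
        = ∑ y, ∑ s, ν y s * ∑ w, ∑ x, Z x w w s y := by
          simp_rw [Finset.mul_sum, Finset.sum_comm (γ := Fin 2 → Y),
            Finset.sum_comm (γ := Fin 2 → S)]
      _ = ∑ y, ∑ s, ν y s := by simp [hZ.sum_diag_eq_one hM]
  have hcausal : ∑ w, ∑ x, ∑ s, ∑ y, κ y (x 0) (s 0) (s 1) * Z x w w s y = 0 :=
    calc ∑ w, ∑ x, ∑ s, ∑ y, κ y (x 0) (s 0) (s 1) * Z x w w s y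
        = ∑ w, ∑ y, ∑ x, ∑ s, κ y (x 0) (s 0) (s 1) * Z x w w s y := by
          simp_rw [Finset.sum_comm (γ := Fin 2 → Y)]
      _ = 0 := by simp [hZ.sum_causal_mul_eq_zero (hκ _)]
  have hsum : ∑ w, ∑ x, ∑ s, ∑ y, prodP P s * prodN N y x s * Z x w w s y
      ≤ M * ∑ s, μ s + ∑ y, ∑ s, ν y s :=
    calc ∑ w, ∑ x, ∑ s, ∑ y, prodP P s * prodN N y x s * Z x w w s y
        ≤ ∑ w, ∑ x, ∑ s, ∑ y, (ρ y x s + ν y s + κ y (x 0) (s 0) (s 1)) * Z x w w s y := by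
          gcongr with w _ x _ s _ y _
          exacts [hZ.1 x w w s y, hdual y x s]
      _ = ∑ w, ∑ x, ∑ s, ∑ y, ρ y x s * Z x w w s y
          + ∑ w, ∑ x, ∑ s, ∑ y, ν y s * Z x w w s y
          + ∑ w, ∑ x, ∑ s, ∑ y, κ y (x 0) (s 0) (s 1) * Z x w w s y := by
          simp only [add_mul, Finset.sum_add_distrib]
      _ ≤ M * ∑ s, μ s + ∑ y, ∑ s, ν y s := by linarith
  have hM' : (0 : ℝ) < M := by exact_mod_cast hM
  calc etaNS N P M 2 Z ≤ 1 / (M : ℝ) * (M * ∑ s, μ s + ∑ y, ∑ s, ν y s) := by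
        rw [etaNS]; gcongr
    _ = ∑ s, μ s + (∑ y, ∑ s, ν y s) / M := by field_simp

end IsNSCa

end BlockLengthTwo

attribute [instance] ClassicalCa.fq

namespace ClassicalCa

variable {X S Y : Type*} [Fintype X] {M n : ℕ}

def encProb (C : ClassicalCa X S Y M n) (x : Fin n → X) (w : Fin M) (s : Fin n → S) (q : C.Q) :
    ℝ :=
  ∏ j, C.E j (x j) (fun k => x ⟨k, k.isLt.trans j.isLt⟩) w (prefixS s j) q

def toNS (C : ClassicalCa X S Y M n) :
    (Fin n → X) → Fin M → Fin M → (Fin n → S) → (Fin n → Y) → ℝ :=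
  fun x wh w s y => ∑ q, C.PQ q * C.encProb x w s q * C.D wh y q

lemma encProb_nonneg (C : ClassicalCa X S Y M n) (x : Fin n → X) (w : Fin M) (s : Fin n → S)
    (q : C.Q) : 0 ≤ C.encProb x w s q :=
  Finset.prod_nonneg fun _ _ => C.E_nonneg ..

lemma sum_toNS_decoded (C : ClassicalCa X S Y M n) (x : Fin n → X) (w : Fin M)
    (s : Fin n → S) (y : Fin n → Y) :
    ∑ wh, C.toNS x wh w s y = ∑ q, C.PQ q * C.encProb x w s q := by
  simp only [toNS]
  rw [Finset.sum_comm]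
  simp [← Finset.mul_sum, C.D_sum]

lemma etaNS_toNS [Fintype S] [Fintype Y] (N : Y → X → S → ℝ) (P : S → ℝ)
    (C : ClassicalCa X S Y M n) : etaNS N P M n C.toNS = etaC N P M n C := by
  simp only [etaNS, etaC, toNS, encProb, Finset.mul_sum]
  simp_rw [Finset.sum_comm (γ := C.Q) (β := ℝ)]
  congr! 6
  ring

lemma encProb_two (C : ClassicalCa X S Y M 2) (a b : X) (w : Fin M) (s : Fin 2 → S) (q : C.Q) :
    C.encProb ![a, b] w s q
      = C.E 0 a Fin.elim0 w (prefixS s 0) q * C.E 1 b (fun _ => a) w (prefixS s 1) q := by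
  rw [encProb, Fin.prod_univ_two]
  congr 2 <;> funext k
  exacts [k.elim0, by simp]

lemma sum_encProb_snd (C : ClassicalCa X S Y M 2) (a : X) (w : Fin M) (s : Fin 2 → S)
    (q : C.Q) : ∑ b, C.encProb ![a, b] w s q = C.E 0 a Fin.elim0 w (prefixS s 0) q := by
  simp [encProb_two, ← Finset.mul_sum, C.E_sum]

lemma sum_encProb (C : ClassicalCa X S Y M 2) (w : Fin M) (s : Fin 2 → S) (q : C.Q) :
    ∑ x, C.encProb x w s q = 1 := by
  rw [sum_fin_two_arrow]
  simp [sum_encProb_snd, C.E_sum]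

lemma prefixS_zero_congr {s s' : Fin 2 → S} (hs : s 0 = s' 0) : prefixS s 0 = prefixS s' 0 := by
  funext k
  simp [prefixS, hs]

theorem isNSCa_toNS [Fintype S] [Fintype Y] (C : ClassicalCa X S Y M 2) : IsNSCa M 2 C.toNS := by
  refine ⟨fun x wh w s y => ?_, fun w s y => ?_, fun x w s y y' => ?_, fun wh w w' s s' y => ?_,
    fun i hi₁ hi₂ x wh w s s' y hs => ?_⟩
  · exact Finset.sum_nonneg fun q _ =>
      mul_nonneg (mul_nonneg (C.PQ_nonneg q) (C.encProb_nonneg x w s q)) (C.D_nonneg wh y q)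
  · simp_rw [sum_toNS_decoded, Finset.sum_comm (γ := Fin 2 → X), ← Finset.mul_sum, sum_encProb,
      mul_one, C.PQ_sum]
  · rw [sum_toNS_decoded, sum_toNS_decoded]
  · simp_rw [toNS, Finset.sum_comm (γ := Fin 2 → X), ← Finset.sum_mul, ← Finset.mul_sum,
      sum_encProb]
  · obtain rfl : i = 1 := by omega
    simp_rw [sum_filter_fst_eq, toNS, Finset.sum_comm (γ := X), ← Finset.sum_mul,
      ← Finset.mul_sum, sum_encProb_snd, prefixS_zero_congr (hs 0 Nat.one_pos)]

variable [Fintype S] [Fintype Y] [Nonempty Y] {N : Y → X → S → ℝ} {P : S → ℝ}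

lemma etaC_le_etaNSOpt (hN : IsChannel N) (hP : IsPMF P) (C : ClassicalCa X S Y M 2) :
    etaC N P M 2 C ≤ etaNSOpt N P M 2 :=
  C.etaNS_toNS N P ▸ etaNS_le_etaNSOpt hN hP C.isNSCa_toNS

lemma etaC_le_etaCOpt (hN : IsChannel N) (hP : IsPMF P) (C : ClassicalCa X S Y M 2) :
    etaC N P M 2 C ≤ etaCOpt N P M 2 :=
  le_csSup ⟨etaNSOpt N P M 2, by rintro _ ⟨C', rfl⟩; exact etaC_le_etaNSOpt hN hP C'⟩ ⟨C, rfl⟩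

end ClassicalCa

lemma etaCOpt_le_etaNSOpt {X Y S : Type*} [Fintype X] [Fintype Y] [Fintype S] [Nonempty Y]
    {N : Y → X → S → ℝ} {P : S → ℝ} {M : ℕ} (hN : IsChannel N) (hP : IsPMF P) :
    etaCOpt N P M 2 ≤ etaNSOpt N P M 2 :=
  Real.sSup_le (by rintro _ ⟨C, rfl⟩; exact C.etaC_le_etaNSOpt hN hP) <|
    Real.sSup_nonneg <| by rintro _ ⟨Z, hZ, rfl⟩; exact etaNS_nonneg hN hP hZ

lemma isChannel_NZ : IsChannel NZ := by
  refine ⟨fun y x s => ?_, fun x s => ?_⟩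
  · unfold NZ; split_ifs <;> norm_num
  · cases x <;> cases s <;> norm_num [NZ]

lemma isPMF_PZ : IsPMF PZ := ⟨fun _ => by norm_num [PZ], by norm_num [PZ]⟩

def z0z1Code : ClassicalCa Bool Bool (Bool × Bool) 2 2 where
  Q := Unit
  fq := inferInstance
  PQ := fun _ => 1
  E := fun j x _ w s _ => if x = xor (s (Fin.last j)) (w = 1) then 1 else 0
  D := fun wh y _ => if wh = (if ∃ j, (y j).1 ≠ (y j).2 then 1 else 0) then 1 else 0
  PQ_nonneg := fun _ => zero_le_one
  PQ_sum := by simp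
  E_nonneg := fun _ _ _ _ _ _ => by split_ifs <;> norm_num
  E_sum := fun _ _ _ _ _ => by simp
  D_nonneg := fun _ _ _ => by split_ifs <;> norm_num
  D_sum := fun _ _ => by simp

lemma etaC_z0z1Code : etaC (NCSIR NZ) PZ 2 2 z0z1Code = 7 / 8 := by
  rw [← ClassicalCa.etaNS_toNS]
  simp [etaNS, ClassicalCa.toNS, sum_fin_two_arrow, ClassicalCa.encProb_two, prodP, prodN,
    Fin.prod_univ_two, Fintype.sum_prod_type, z0z1Code, prefixS, NCSIR, NZ, PZ, Fin.exists_fin_two,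
    show (@univ Unit z0z1Code.fq).card = 1 from rfl]
  norm_num

/- An optimal dual solution. It depends on `y` and `x` only through `d = y ⊕ s` and `e = x ⊕ s`,
since flipping `x`, `y` and `s` together preserves the channel. -/
def z0z1CapDual (d₀ d₁ e₀ e₁ : Bool) : ℝ :=
  match d₀, d₁, e₀, e₁ with
  | false, false, false, false => 3 / 32
  | false, true, false, true => 3 / 32
  | true, false, true, false => 3 / 32
  | true, false, true, true => 1 / 32
  | true, true, true, true => 1 / 16
  | _, _, _, _ => 0

def z0z1NormDual (d₀ d₁ : Bool) : ℝ :=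
  match d₀, d₁ with
  | false, false => 1 / 8
  | false, true => 1 / 16
  | true, false => 1 / 32
  | true, true => 0

def z0z1CausalDual (y : Fin 2 → Bool) (x₀ s₀ s₁ : Bool) : ℝ :=
  if x₀ = s₀ ∧ y 0 = s₀ then (if y 1 = s₁ then 1 / 32 else -1 / 32) else 0

lemma z0z1_dual_feasible (y x s : Fin 2 → Bool) :
    prodP PZ s * prodN NZ y x s
      ≤ z0z1CapDual (y 0 != s 0) (y 1 != s 1) (x 0 != s 0) (x 1 != s 1)
        + z0z1NormDual (y 0 != s 0) (y 1 != s 1) + z0z1CausalDual y (x 0) (s 0) (s 1) := by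
  revert y x s
  simp only [Fin.forall_fin_succ_pi, Fin.forall_fin_zero_pi, Bool.forall_bool]
  norm_num [prodP, prodN, NZ, PZ, z0z1CapDual, z0z1NormDual, z0z1CausalDual]

lemma etaNS_NZ_le {Z : (Fin 2 → Bool) → Fin 2 → Fin 2 → (Fin 2 → Bool) → (Fin 2 → Bool) → ℝ}
    (hZ : IsNSCa 2 2 Z) : etaNS NZ PZ 2 2 Z ≤ 13 / 16 := by
  have h := hZ.etaNS_le_of_dual two_pos (μ := fun _ => 3 / 32)
    (fun y x s => by unfold z0z1CapDual; split <;> norm_num)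
    (fun x s => by
      revert x s
      simp only [Fin.forall_fin_succ_pi, Fin.forall_fin_zero_pi, Bool.forall_bool]
      norm_num [sum_fin_two_arrow, z0z1CapDual])
    (fun y a c => by
      rw [Fintype.sum_bool]; unfold z0z1CausalDual; split_ifs <;> simp_all <;> norm_num)
    z0z1_dual_feasible
  refine h.trans_eq ?_
  simp [sum_fin_two_arrow, z0z1NormDual]
  norm_num

/-- For the Z0/Z1 channel, at message size 2 and blocklength 2:
`η^{NS,ca}_opt(N^CSIR) ≥ η^{C,ca}_opt(N^CSIR) ≥ 7/8` while `η^{NS,ca}_opt(N) ≤ 13/16`. -/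
theorem z0z1_csir_vs_no_csir :
    etaNSOpt (NCSIR NZ) PZ 2 2 ≥ etaCOpt (NCSIR NZ) PZ 2 2 ∧
    etaCOpt (NCSIR NZ) PZ 2 2 ≥ 7 / 8 ∧
    etaNSOpt NZ PZ 2 2 ≤ 13 / 16 := by
  have hN := isChannel_NZ.csir
  refine ⟨etaCOpt_le_etaNSOpt hN isPMF_PZ, ?_, ?_⟩
  · rw [← etaC_z0z1Code]
    exact z0z1Code.etaC_le_etaCOpt hN isPMF_PZ
  · exact Real.sSup_le (by rintro _ ⟨Z, hZ, rfl⟩; exact etaNS_NZ_le hZ) (by norm_num)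

end
end

section
/- Linear-program reduction, forward direction: let (N, P_S) be a channel with state, M ≥ 2, n ∈ ℕ, and Z ∈ 𝒵^{NS,ca}(M,n). Fix any y₀^n ∈ 𝒴^n and define r_{x^n, y^n, s^n} = (1/M) Σ_{w∈[M]} Z(x^n, w | w, s^n, y^n) and q_{x^n | s^n} = (1/M) Σ_{w∈[M]} Σ_{ŵ∈[M]} Z(x^n, ŵ | w, s^n, y₀^n). Then: (i) q_{x^n|s^n} does not depend on the choice of y₀^n; (ii) r ≥ 0; (iii) Σ_{x^n} r_{x^n, y^n, s^n} = 1/M for all (y^n, s^n); (iv) Σ_{x^n} q_{x^n | s^n} = 1 for all s^n; (v) r_{x^n,y^n,s^n} ≤ q_{x^n|s^n} for all (x^n, y^n, s^n); (vi) for every i ∈ {1,…,n−1}, both Σ_{x_{i+1},…,x_n} r_{x^n,y^n,s^n} and Σ_{x_{i+1},…,x_n} q_{x^n|s^n} are invariant under changes of (s_{i+1},…,s_n); and (vii) Σ_{x^n,y^n,s^n} r_{x^n,y^n,s^n} · P_S^{⊗n}(s^n) · N^{⊗n}(y^n|x^n,s^n) = η(Z). -/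
open scoped Classical BigOperators
open Finset Filter

noncomputable section

lemma sum4_comm' {α β γ δ : Type*} [Fintype α] [Fintype β] [Fintype γ] [Fintype δ]
    (f : α → β → γ → δ → ℝ) :
    ∑ a, ∑ b, ∑ c, ∑ d, f a b c d = ∑ b, ∑ d, ∑ c, ∑ a, f a b c d := by
  rw [Finset.sum_comm]
  refine Finset.sum_congr rfl fun b _ => ?_
  calc ∑ a, ∑ c, ∑ d, f a b c d
      = ∑ a, ∑ d, ∑ c, f a b c d := Finset.sum_congr rfl fun a _ => Finset.sum_comm
    _ = ∑ d, ∑ a, ∑ c, f a b c d := Finset.sum_comm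
    _ = ∑ d, ∑ c, ∑ a, f a b c d := Finset.sum_congr rfl fun d _ => Finset.sum_comm

/-- LP reduction, forward direction: from any NS-assisted
causal-CSIT scheme `Z` one obtains feasible LP variables `r, q` with the listed
properties, achieving the objective value `η(Z)`. -/
theorem lp_reduction_forward {X Y S : Type*} [Fintype X] [Fintype Y] [Fintype S]
    [Nonempty X] [Nonempty Y] [Nonempty S]
    (N : Y → X → S → ℝ) (P : S → ℝ) (hN : IsChannel N) (hP : IsPMF P)
    (M n : ℕ) (hM : 2 ≤ M)
    (Z : (Fin n → X) → Fin M → Fin M → (Fin n → S) → (Fin n → Y) → ℝ)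
    (hZ : IsNSCa M n Z) (y₀ : Fin n → Y) :
    let r : (Fin n → X) → (Fin n → Y) → (Fin n → S) → ℝ :=
      fun x y s => (1 / (M : ℝ)) * ∑ w, Z x w w s y
    let q : (Fin n → X) → (Fin n → S) → ℝ :=
      fun x s => (1 / (M : ℝ)) * ∑ w, ∑ wh, Z x wh w s y₀
    -- (i) q does not depend on the choice of y₀
    (∀ (x : Fin n → X) (s : Fin n → S) (y₀' : Fin n → Y),
        q x s = (1 / (M : ℝ)) * ∑ w, ∑ wh, Z x wh w s y₀') ∧
    -- (ii) r ≥ 0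
    (∀ x y s, 0 ≤ r x y s) ∧
    -- (iii) Σ_x r = 1/M
    (∀ y s, ∑ x, r x y s = 1 / (M : ℝ)) ∧
    -- (iv) Σ_x q = 1
    (∀ s, ∑ x, q x s = 1) ∧
    -- (v) r ≤ q
    (∀ x y s, r x y s ≤ q x s) ∧
    -- (vi) causality of the partial marginals of r and q
    (∀ i : ℕ, 1 ≤ i → i < n → ∀ (x : Fin n → X) (y : Fin n → Y) (s s' : Fin n → S),
        (∀ j : Fin n, (j : ℕ) < i → s j = s' j) →
        (∑ x' ∈ univ.filter (fun x' : Fin n → X => ∀ j : Fin n, (j : ℕ) < i → x' j = x j),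
            r x' y s) =
          (∑ x' ∈ univ.filter (fun x' : Fin n → X => ∀ j : Fin n, (j : ℕ) < i → x' j = x j),
            r x' y s') ∧
        (∑ x' ∈ univ.filter (fun x' : Fin n → X => ∀ j : Fin n, (j : ℕ) < i → x' j = x j),
            q x' s) =
          (∑ x' ∈ univ.filter (fun x' : Fin n → X => ∀ j : Fin n, (j : ℕ) < i → x' j = x j),
            q x' s')) ∧
    -- (vii) the LP objective equals η(Z)
    (∑ x, ∑ y, ∑ s, r x y s * prodP P s * prodN N y x s = etaNS N P M n Z) := by
  obtain ⟨hnn, hnorm, hC1, hC2, hC3⟩ := hZ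
  have hMpos : 0 < M := by omega
  have hM0 : (M : ℝ) ≠ 0 := Nat.cast_ne_zero.mpr (by omega)
  have w₀ : Fin M := ⟨0, hMpos⟩
  intro r q
  refine ⟨?_, ?_, ?_, ?_, ?_, ?_, ?_⟩
  · -- (i)
    intro x s y₀'
    simp only [q]
    congr 1
    exact Finset.sum_congr rfl fun w _ => hC1 x w s y₀ y₀'
  · -- (ii)
    intro x y s
    have : 0 ≤ ∑ w, Z x w w s y := Finset.sum_nonneg fun w _ => hnn x w w s y
    simp only [r]
    positivity
  · -- (iii)
    intro y s
    simp only [r]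
    rw [← Finset.mul_sum]
    have : ∑ x, ∑ w, Z x w w s y = 1 := by
     calc ∑ x, ∑ w, Z x w w s y
        = ∑ w, ∑ x, Z x w w s y := Finset.sum_comm
      _ = ∑ w, ∑ x, Z x w w₀ s y :=
          Finset.sum_congr rfl fun w _ => hC2 w w w₀ s s y
      _ = ∑ x, ∑ w, Z x w w₀ s y := Finset.sum_comm
      _ = 1 := hnorm w₀ s y
    rw [this, mul_one]
  · -- (iv)
    intro s
    simp only [q]
    rw [← Finset.mul_sum]
    have : ∑ x, ∑ w : Fin M, ∑ wh, Z x wh w s y₀ = (M : ℝ) := by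
      rw [Finset.sum_comm]
      rw [Finset.sum_congr rfl fun w _ => hnorm w s y₀]
      simp
    rw [this]
    field_simp
  · -- (v)
    intro x y s
    simp only [r, q]
    have h1 : ∑ w, Z x w w s y ≤ ∑ w, ∑ wh, Z x wh w s y := by
      refine Finset.sum_le_sum fun w _ => ?_
      exact Finset.single_le_sum (fun wh _ => hnn x wh w s y) (Finset.mem_univ w)
    have h2 : ∑ w, ∑ wh, Z x wh w s y = ∑ w, ∑ wh, Z x wh w s y₀ :=
      Finset.sum_congr rfl fun w _ => hC1 x w s y y₀
    have hMinv : 0 ≤ 1 / (M : ℝ) := by positivity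
    calc (1 / (M : ℝ)) * ∑ w, Z x w w s y
        ≤ (1 / (M : ℝ)) * ∑ w, ∑ wh, Z x wh w s y := by
          exact mul_le_mul_of_nonneg_left h1 hMinv
      _ = (1 / (M : ℝ)) * ∑ w, ∑ wh, Z x wh w s y₀ := by rw [h2]
  · -- (vi)
    intro i h1 h2 x y s s' hss
    constructor
    · simp only [r]
      rw [← Finset.mul_sum, ← Finset.mul_sum]
      congr 1
      rw [Finset.sum_comm]
      rw [Finset.sum_congr rfl fun w _ => hC3 i h1 h2 x w w s s' y hss]
      exact Finset.sum_comm
    · simp only [q]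
      rw [← Finset.mul_sum, ← Finset.mul_sum]
      congr 1
      rw [Finset.sum_comm]
      have step : ∀ w : Fin M,
          (∑ x' ∈ univ.filter (fun x' : Fin n → X => ∀ j : Fin n, (j : ℕ) < i → x' j = x j),
            ∑ wh, Z x' wh w s y₀)
          = ∑ x' ∈ univ.filter (fun x' : Fin n → X => ∀ j : Fin n, (j : ℕ) < i → x' j = x j),
            ∑ wh, Z x' wh w s' y₀ := by
        intro w
        rw [Finset.sum_comm]
        rw [Finset.sum_congr rfl fun wh _ => hC3 i h1 h2 x wh w s s' y₀ hss]
        exact Finset.sum_comm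
      rw [Finset.sum_congr rfl fun w _ => step w]
      exact Finset.sum_comm
  · -- (vii)
    have key : etaNS N P M n Z
        = ∑ x, ∑ y, ∑ s, ∑ w,
            (1 / (M : ℝ)) * (prodP P s * prodN N y x s * Z x w w s y) := by
      unfold etaNS
      rw [← sum4_comm' (fun w x s y => (1 / (M : ℝ)) *
        (prodP P s * prodN N y x s * Z x w w s y))]
      simp only [Finset.mul_sum]
    rw [key]
    refine Finset.sum_congr rfl fun x _ => Finset.sum_congr rfl fun y _ =>
      Finset.sum_congr rfl fun s _ => ?_
    simp only [r]
    rw [Finset.mul_sum, Finset.sum_mul, Finset.sum_mul]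
    exact Finset.sum_congr rfl fun w _ => by ring

end
end

section
/- Linear-program reduction, converse direction: let (N, P_S) be a channel with state, M ≥ 2, n ∈ ℕ. Suppose r : 𝒳^n × 𝒴^n × 𝒮^n → ℝ and q : 𝒳^n × 𝒮^n → ℝ satisfy: r ≥ 0; Σ_{x^n} r_{x^n,y^n,s^n} = 1/M for all (y^n, s^n); Σ_{x^n} q_{x^n|s^n} = 1 for all s^n; r_{x^n,y^n,s^n} ≤ q_{x^n|s^n} for all (x^n,y^n,s^n); and for every i ∈ {1,…,n−1}, both Σ_{x_{i+1},…,x_n} r_{x^n,y^n,s^n} and Σ_{x_{i+1},…,x_n} q_{x^n|s^n} are invariant under changes of (s_{i+1},…,s_n). Define Z(x^n, ŵ | w, s^n, y^n) = r_{x^n,y^n,s^n} if ŵ = w and (q_{x^n|s^n} − r_{x^n,y^n,s^n})/(M−1) if ŵ ≠ w. Then Z ∈ 𝒵^{NS,ca}(M,n) (i.e., Z is nonnegative, normalized, and satisfies conditions C1, C2, C3) and η(Z) = Σ_{x^n,y^n,s^n} r_{x^n,y^n,s^n} · P_S^{⊗n}(s^n) · N^{⊗n}(y^n|x^n,s^n).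 -/
open scoped Classical BigOperators
open Finset Filter

noncomputable section

/-!
The message guess is decoupled from the encoding: the input marginal `∑_ŵ Z = q` does not see `y`
(C1), and for each fixed `ŵ` the output marginal `∑_x Z` equals `1/M` whatever `w` and `s` are
(C2); the causality constraints on `r` and `q` pass to `Z` since partial sums over inputs of `Z`
are affine in those of `r` and `q` (C3). On the diagonal `ŵ = w` the scheme is `r`, so averaging
the success probability over the `M` messages returns the LP objective.
-/

theorem Fintype.sum_ite_eq_add_card_sub_one_mul {ι : Type*} [Fintype ι] [DecidableEq ι]
    (j : ι) (a b : ℝ) :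
    ∑ i, (if i = j then a else b) = a + ((Fintype.card ι : ℝ) - 1) * b := by
  have hsplit : ∀ i, (if i = j then a else b) = b + (if i = j then a - b else 0) := by
    intro i; split_ifs <;> ring
  simp only [hsplit, Finset.sum_add_distrib, Finset.sum_const, Finset.sum_ite_eq',
    Finset.mem_univ, if_true, Finset.card_univ, nsmul_eq_mul]
  ring

section LPScheme

variable {α β σ : Type*} {M : ℕ} (r : α → β → σ → ℝ) (q : α → σ → ℝ)

def lpScheme (M : ℕ) : α → Fin M → Fin M → σ → β → ℝ :=
  fun x wh w s y => if wh = w then r x y s else (q x s - r x y s) / ((M : ℝ) - 1)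

@[simp]
theorem lpScheme_self (x : α) (w : Fin M) (s : σ) (y : β) :
    lpScheme r q M x w w s y = r x y s :=
  if_pos rfl

theorem lpScheme_nonneg (hM : 1 ≤ M) (hr0 : ∀ x y s, 0 ≤ r x y s)
    (hrq : ∀ x y s, r x y s ≤ q x s) (x : α) (wh w : Fin M) (s : σ) (y : β) :
    0 ≤ lpScheme r q M x wh w s y := by
  have hM' : (1 : ℝ) ≤ M := by exact_mod_cast hM
  unfold lpScheme
  split_ifs
  · exact hr0 x y s
  · exact div_nonneg (sub_nonneg.mpr (hrq x y s)) (sub_nonneg.mpr hM')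

theorem sum_guess_lpScheme (hM : 2 ≤ M) (x : α) (w : Fin M) (s : σ) (y : β) :
    ∑ wh, lpScheme r q M x wh w s y = q x s := by
  have hM' : (M : ℝ) - 1 ≠ 0 := by
    have : (2 : ℝ) ≤ M := by exact_mod_cast hM
    linarith
  simp only [lpScheme, Fintype.sum_ite_eq_add_card_sub_one_mul, Fintype.card_fin]
  field_simp
  ring

theorem finset_sum_lpScheme (A : Finset α) (wh w : Fin M) (s : σ) (y : β) :
    ∑ x ∈ A, lpScheme r q M x wh w s y =
      if wh = w then ∑ x ∈ A, r x y s
      else ((∑ x ∈ A, q x s) - ∑ x ∈ A, r x y s) / ((M : ℝ) - 1) := by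
  unfold lpScheme
  split_ifs
  · rfl
  · rw [← Finset.sum_sub_distrib, Finset.sum_div]

end LPScheme

theorem isNSCa_lpScheme {X Y S : Type*} [Fintype X] [Fintype Y] [Fintype S] {M n : ℕ}
    (hM : 2 ≤ M) (r : (Fin n → X) → (Fin n → Y) → (Fin n → S) → ℝ)
    (q : (Fin n → X) → (Fin n → S) → ℝ)
    (hr0 : ∀ x y s, 0 ≤ r x y s) (hrsum : ∀ y s, ∑ x, r x y s = 1 / (M : ℝ))
    (hqsum : ∀ s, ∑ x, q x s = 1) (hrq : ∀ x y s, r x y s ≤ q x s)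
    (hrcausal : ∀ i : ℕ, 1 ≤ i → i < n →
      ∀ (x : Fin n → X) (y : Fin n → Y) (s s' : Fin n → S),
        (∀ j : Fin n, (j : ℕ) < i → s j = s' j) →
        (∑ x' ∈ univ.filter (fun x' : Fin n → X => ∀ j : Fin n, (j : ℕ) < i → x' j = x j),
            r x' y s) =
          ∑ x' ∈ univ.filter (fun x' : Fin n → X => ∀ j : Fin n, (j : ℕ) < i → x' j = x j),
            r x' y s')
    (hqcausal : ∀ i : ℕ, 1 ≤ i → i < n →
      ∀ (x : Fin n → X) (s s' : Fin n → S),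
        (∀ j : Fin n, (j : ℕ) < i → s j = s' j) →
        (∑ x' ∈ univ.filter (fun x' : Fin n → X => ∀ j : Fin n, (j : ℕ) < i → x' j = x j),
            q x' s) =
          ∑ x' ∈ univ.filter (fun x' : Fin n → X => ∀ j : Fin n, (j : ℕ) < i → x' j = x j),
            q x' s') :
    IsNSCa M n (lpScheme r q M) := by
  have hM' : (M : ℝ) - 1 ≠ 0 := by
    have : (2 : ℝ) ≤ M := by exact_mod_cast hM
    linarith
  have houtput : ∀ (wh w : Fin M) s y, ∑ x, lpScheme r q M x wh w s y = 1 / (M : ℝ) := by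
    intro wh w s y
    rw [finset_sum_lpScheme, hqsum, hrsum]
    split_ifs
    · rfl
    · field_simp
  refine ⟨lpScheme_nonneg r q (by omega) hr0 hrq, ?_, ?_, ?_, ?_⟩
  · intro w s y
    simp only [sum_guess_lpScheme r q hM, hqsum]
  · intro x w s y y'
    rw [sum_guess_lpScheme r q hM, sum_guess_lpScheme r q hM]
  · intro wh w w' s s' y
    rw [houtput, houtput]
  · intro i hi hin x wh w s s' y hss
    rw [finset_sum_lpScheme, finset_sum_lpScheme, hrcausal i hi hin x y s s' hss,
      hqcausal i hi hin x s s' hss]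

theorem etaNS_lpScheme {X Y S : Type*} [Fintype X] [Fintype Y] [Fintype S]
    (N : Y → X → S → ℝ) (P : S → ℝ) {M n : ℕ} (hM : M ≠ 0)
    (r : (Fin n → X) → (Fin n → Y) → (Fin n → S) → ℝ) (q : (Fin n → X) → (Fin n → S) → ℝ) :
    etaNS N P M n (lpScheme r q M) = ∑ x, ∑ y, ∑ s, r x y s * prodP P s * prodN N y x s := by
  have hM' : (M : ℝ) ≠ 0 := by exact_mod_cast hM
  simp only [etaNS, lpScheme_self, Finset.sum_const, Finset.card_univ, Fintype.card_fin,
    nsmul_eq_mul]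
  rw [← mul_assoc, one_div_mul_cancel hM', one_mul]
  refine Finset.sum_congr rfl fun x _ => ?_
  rw [Finset.sum_comm]
  exact Finset.sum_congr rfl fun y _ => Finset.sum_congr rfl fun s _ => by ring

theorem lp_reduction_converse_general {X Y S : Type*} [Fintype X] [Fintype Y] [Fintype S]
    (N : Y → X → S → ℝ) (P : S → ℝ)
    (M n : ℕ) (hM : 2 ≤ M)
    (r : (Fin n → X) → (Fin n → Y) → (Fin n → S) → ℝ)
    (q : (Fin n → X) → (Fin n → S) → ℝ)
    (hr0 : ∀ x y s, 0 ≤ r x y s)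
    (hrsum : ∀ y s, ∑ x, r x y s = 1 / (M : ℝ))
    (hqsum : ∀ s, ∑ x, q x s = 1)
    (hrq : ∀ x y s, r x y s ≤ q x s)
    (hrcausal : ∀ i : ℕ, 1 ≤ i → i < n →
      ∀ (x : Fin n → X) (y : Fin n → Y) (s s' : Fin n → S),
        (∀ j : Fin n, (j : ℕ) < i → s j = s' j) →
        (∑ x' ∈ univ.filter (fun x' : Fin n → X => ∀ j : Fin n, (j : ℕ) < i → x' j = x j),
            r x' y s) =
          ∑ x' ∈ univ.filter (fun x' : Fin n → X => ∀ j : Fin n, (j : ℕ) < i → x' j = x j),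
            r x' y s')
    (hqcausal : ∀ i : ℕ, 1 ≤ i → i < n →
      ∀ (x : Fin n → X) (s s' : Fin n → S),
        (∀ j : Fin n, (j : ℕ) < i → s j = s' j) →
        (∑ x' ∈ univ.filter (fun x' : Fin n → X => ∀ j : Fin n, (j : ℕ) < i → x' j = x j),
            q x' s) =
          ∑ x' ∈ univ.filter (fun x' : Fin n → X => ∀ j : Fin n, (j : ℕ) < i → x' j = x j),
            q x' s') :
    let Z : (Fin n → X) → Fin M → Fin M → (Fin n → S) → (Fin n → Y) → ℝ :=
      fun x wh w s y => if wh = w then r x y s else (q x s - r x y s) / ((M : ℝ) - 1)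
    IsNSCa M n Z ∧ etaNS N P M n Z = ∑ x, ∑ y, ∑ s, r x y s * prodP P s * prodN N y x s :=
  ⟨isNSCa_lpScheme hM r q hr0 hrsum hqsum hrq hrcausal hqcausal,
    etaNS_lpScheme N P (by omega) r q⟩

/-- LP reduction, converse direction: from feasible LP variables
`r, q` one constructs an NS-assisted causal-CSIT scheme `Z` whose success
probability is the LP objective value. -/
theorem lp_reduction_converse {X Y S : Type*} [Fintype X] [Fintype Y] [Fintype S]
    [Nonempty X] [Nonempty Y] [Nonempty S]
    (N : Y → X → S → ℝ) (P : S → ℝ) (hN : IsChannel N) (hP : IsPMF P)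
    (M n : ℕ) (hM : 2 ≤ M)
    (r : (Fin n → X) → (Fin n → Y) → (Fin n → S) → ℝ)
    (q : (Fin n → X) → (Fin n → S) → ℝ)
    (hr0 : ∀ x y s, 0 ≤ r x y s)
    (hrsum : ∀ y s, ∑ x, r x y s = 1 / (M : ℝ))
    (hqsum : ∀ s, ∑ x, q x s = 1)
    (hrq : ∀ x y s, r x y s ≤ q x s)
    (hrcausal : ∀ i : ℕ, 1 ≤ i → i < n →
      ∀ (x : Fin n → X) (y : Fin n → Y) (s s' : Fin n → S),
        (∀ j : Fin n, (j : ℕ) < i → s j = s' j) →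
        (∑ x' ∈ univ.filter (fun x' : Fin n → X => ∀ j : Fin n, (j : ℕ) < i → x' j = x j),
            r x' y s) =
          ∑ x' ∈ univ.filter (fun x' : Fin n → X => ∀ j : Fin n, (j : ℕ) < i → x' j = x j),
            r x' y s')
    (hqcausal : ∀ i : ℕ, 1 ≤ i → i < n →
      ∀ (x : Fin n → X) (s s' : Fin n → S),
        (∀ j : Fin n, (j : ℕ) < i → s j = s' j) →
        (∑ x' ∈ univ.filter (fun x' : Fin n → X => ∀ j : Fin n, (j : ℕ) < i → x' j = x j),
            q x' s) =
          ∑ x' ∈ univ.filter (fun x' : Fin n → X => ∀ j : Fin n, (j : ℕ) < i → x' j = x j),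
            q x' s') :
    let Z : (Fin n → X) → Fin M → Fin M → (Fin n → S) → (Fin n → Y) → ℝ :=
      fun x wh w s y => if wh = w then r x y s else (q x s - r x y s) / ((M : ℝ) - 1)
    IsNSCa M n Z ∧ etaNS N P M n Z = ∑ x, ∑ y, ∑ s, r x y s * prodP P s * prodN N y x s :=
  lp_reduction_converse_general N P M n hM r q hr0 hrsum hqsum hrq hrcausal hqcausal

end
end

section
/- Explicit 13/16 bound at the level of the reduced linear program for the Z0/Z1 channel: let N be the transition function of the Z0/Z1 channel. Suppose r : {0,1}² × {0,1}² × {0,1}² → ℝ (indexed r_{x₁,x₂,y₁,y₂,s₁,s₂}) and q : {0,1}² × {0,1}² → ℝ (indexed q_{x₁,x₂|s₁,s₂}) satisfy: r_{x₁,x₂,y₁,y₂,s₁,s₂} ≥ 0 for all indices; Σ_{x₁,x₂} r_{x₁,x₂,y₁,y₂,s₁,s₂} = 1/2 for all (y₁,y₂,s₁,s₂); Σ_{x₁,x₂} q_{x₁,x₂|s₁,s₂} = 1 for all (s₁,s₂); r_{x₁,x₂,y₁,y₂,s₁,s₂} ≤ q_{x₁,x₂|s₁,s₂} for all indices; and Σ_{x₂}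 r_{x₁,x₂,y₁,y₂,s₁,0} = Σ_{x₂} r_{x₁,x₂,y₁,y₂,s₁,1} for all (x₁,y₁,y₂,s₁). Then (1/4) Σ_{x₁,x₂,y₁,y₂,s₁,s₂} r_{x₁,x₂,y₁,y₂,s₁,s₂} · N(y₁|x₁,s₁) · N(y₂|x₂,s₂) ≤ 13/16. -/
open scoped Classical BigOperators
open Finset Filter

noncomputable section

/-!
Since `NZ y x s = ([x = y] + [s = y]) / 2`, sixteen times the objective is the sum of
`r(x, y, s) ([x₁ = y₁] + [s₁ = y₁]) ([x₂ = y₂] + [s₂ = y₂])`. Causality says that the `x₁`-marginal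
of `r(·, y, (s₁, s₂))` does not depend on `s₂`, so the cross term `[x₁ = y₁] [s₂ = y₂]` may be
replaced by its average `[x₁ = y₁] / 2` over `s₂`. After this the objective splits into one small linear
program per state `s`, whose value `13 / 4` is certified by an explicit dual solution.
-/

lemma NZ_eq_add_div_two (y x s : Bool) :
    NZ y x s = ((if x = y then 1 else 0) + (if s = y then 1 else 0)) / 2 := by
  cases y <;> cases x <;> cases s <;> norm_num [NZ]

theorem sum_sum_mul_le_of_dual {X Y : Type*} [Fintype X] [Fintype Y] {ρ w ν : X → Y → ℝ}
    {p : X → ℝ} {lam : Y → ℝ} {m μ : ℝ}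
    (hρ0 : ∀ x y, 0 ≤ ρ x y) (hρp : ∀ x y, ρ x y ≤ p x) (hρm : ∀ y, ∑ x, ρ x y = m)
    (hν0 : ∀ x y, 0 ≤ ν x y) (hνμ : ∀ x, ∑ y, ν x y = μ)
    (hw : ∀ x y, w x y ≤ lam y + ν x y) :
    ∑ x, ∑ y, w x y * ρ x y ≤ m * ∑ y, lam y + μ * ∑ x, p x := calc
  ∑ x, ∑ y, w x y * ρ x y ≤ ∑ x, ∑ y, (lam y + ν x y) * ρ x y :=
    sum_le_sum fun x _ => sum_le_sum fun y _ => mul_le_mul_of_nonneg_right (hw x y) (hρ0 x y)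
  _ = ∑ y, lam y * ∑ x, ρ x y + ∑ x, ∑ y, ν x y * ρ x y := by
    simp only [add_mul, sum_add_distrib, mul_sum]
    rw [sum_comm]
  _ ≤ ∑ y, lam y * m + ∑ x, ∑ y, ν x y * p x := by
    simp only [hρm]
    gcongr with x _ y _
    exacts [hν0 x y, hρp x y]
  _ = m * ∑ y, lam y + μ * ∑ x, p x := by
    simp only [← sum_mul, hνμ, mul_sum, mul_comm]

def stateWeight (s x y : Bool × Bool) : ℝ :=
  (if s = y then 1 else 0) + (if s.1 = y.1 ∧ x.2 = y.2 then 1 else 0) +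
    (if x.1 = y.1 then 1 / 2 else 0) + (if x = y then 1 else 0)

lemma sum_stateWeight_mul_le (s : Bool × Bool) {ρ : Bool × Bool → Bool × Bool → ℝ}
    {p : Bool × Bool → ℝ} (hρ0 : ∀ x y, 0 ≤ ρ x y) (hρp : ∀ x y, ρ x y ≤ p x)
    (hρm : ∀ y, ∑ x, ρ x y = 1 / 2) :
    ∑ x, ∑ y, stateWeight s x y * ρ x y ≤ 7 / 4 + 3 / 2 * ∑ x, p x := by
  obtain ⟨s₁, s₂⟩ := s
  -- an optimal dual solution, found by solving the linear program
  have h := sum_sum_mul_le_of_dual (w := stateWeight (s₁, s₂)) (μ := 3 / 2)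
    (lam := fun y => (if (s₁, s₂) = y then 1 else 0) + if s₁ = y.1 then 1 else 1 / 4)
    (ν := fun x y => if x.1 = y.1 then
      (if y.1 = s₁ then (if x.2 = y.2 then 3 / 2 else 0) else (if x.2 = y.2 then 5 / 4 else 1 / 4))
      else 0)
    hρ0 hρp hρm (fun x y => by split_ifs <;> norm_num)
    (by rintro ⟨_ | _, _ | _⟩ <;> cases s₁ <;> norm_num [Fintype.sum_prod_type])
    (by rintro ⟨_ | _, _ | _⟩ ⟨_ | _, _ | _⟩ <;> cases s₁ <;> cases s₂ <;> norm_num [stateWeight])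
  convert h using 2
  cases s₁ <;> cases s₂ <;> norm_num [Fintype.sum_prod_type]

lemma sum_marginal_eq_of_causal (r : (Bool × Bool) → (Bool × Bool) → (Bool × Bool) → ℝ)
    (hcausal : ∀ (x₁ y₁ y₂ s₁ : Bool),
      (∑ x₂ : Bool, r (x₁, x₂) (y₁, y₂) (s₁, false)) =
        ∑ x₂ : Bool, r (x₁, x₂) (y₁, y₂) (s₁, true)) :
    ∑ s₁, ∑ y : Bool × Bool, ∑ x₂, r (y.1, x₂) y (s₁, y.2) =
      ∑ s₁, ∑ y : Bool × Bool, ∑ x₂, r (y.1, x₂) y (s₁, !y.2) := by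
  refine sum_congr rfl fun s₁ _ => sum_congr rfl fun ⟨y₁, y₂⟩ _ => ?_
  cases y₂
  · exact hcausal y₁ y₁ false s₁
  · exact (hcausal y₁ y₁ true s₁).symm

lemma four_mul_objective_eq (r : (Bool × Bool) → (Bool × Bool) → (Bool × Bool) → ℝ)
    (hcausal : ∀ (x₁ y₁ y₂ s₁ : Bool),
      (∑ x₂ : Bool, r (x₁, x₂) (y₁, y₂) (s₁, false)) =
        ∑ x₂ : Bool, r (x₁, x₂) (y₁, y₂) (s₁, true)) :
    4 * ∑ x₁ : Bool, ∑ x₂ : Bool, ∑ y₁ : Bool, ∑ y₂ : Bool, ∑ s₁ : Bool, ∑ s₂ : Bool,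
        r (x₁, x₂) (y₁, y₂) (s₁, s₂) * NZ y₁ x₁ s₁ * NZ y₂ x₂ s₂ =
      ∑ s, ∑ x, ∑ y, stateWeight s x y * r x y s := by
  have h := sum_marginal_eq_of_causal r hcausal
  simp only [Fintype.sum_prod_type, Fintype.sum_bool, NZ_eq_add_div_two, stateWeight, Bool.not_true,
    Bool.not_false] at h ⊢
  norm_num
  linear_combination (1 / 2) * h

/-- Explicit `13/16` bound for the reduced LP of the Z0/Z1 channel
at `M = 2`, `n = 2`. Booleans `false, true` stand for the symbols `0, 1`. -/
theorem z0z1_lp_bound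
    (r : (Bool × Bool) → (Bool × Bool) → (Bool × Bool) → ℝ)
    (q : (Bool × Bool) → (Bool × Bool) → ℝ)
    (hr0 : ∀ x y s, 0 ≤ r x y s)
    (hrsum : ∀ y s, ∑ x : Bool × Bool, r x y s = 1 / 2)
    (hqsum : ∀ s, ∑ x : Bool × Bool, q x s = 1)
    (hrq : ∀ x y s, r x y s ≤ q x s)
    (hrcausal : ∀ (x₁ y₁ y₂ s₁ : Bool),
      (∑ x₂ : Bool, r (x₁, x₂) (y₁, y₂) (s₁, false)) =
        ∑ x₂ : Bool, r (x₁, x₂) (y₁, y₂) (s₁, true)) :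
    (1 / 4) * ∑ x₁ : Bool, ∑ x₂ : Bool, ∑ y₁ : Bool, ∑ y₂ : Bool, ∑ s₁ : Bool, ∑ s₂ : Bool,
        r (x₁, x₂) (y₁, y₂) (s₁, s₂) * NZ y₁ x₁ s₁ * NZ y₂ x₂ s₂ ≤ 13 / 16 := by
  have hstate : ∀ s, ∑ x, ∑ y, stateWeight s x y * r x y s ≤ 13 / 4 := fun s => by
    have h := sum_stateWeight_mul_le s (fun x y => hr0 x y s) (fun x y => hrq x y s)
      (fun y => hrsum y s)
    rw [hqsum s] at h
    linarith
  have htotal : ∑ s, ∑ x, ∑ y, stateWeight s x y * r x y s ≤ 13 := calc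
    _ ≤ ∑ _s : Bool × Bool, (13 / 4 : ℝ) := sum_le_sum fun s _ => hstate s
    _ = 13 := by norm_num
  linarith [four_mul_objective_eq r hrcausal]

end
end

section
/- Existence of a causal type-fixing map (Algorithm 1): let 𝒜 be a finite nonempty set, φ a symbol not in 𝒜, P a probability mass function on 𝒜, ε ∈ (0,1), and n ∈ ℕ. Set t_α = ⌊n(1−ε)P(α)⌋ for each α ∈ 𝒜 and t̄ = n − Σ_{α∈𝒜} t_α (note Σ_{α} t_α ≤ n(1−ε) ≤ n, so t̄ ≥ 0). Then there exists a map F : 𝒜^n → (𝒜 ∪ {φ})^n such that: (i) for every a^n ∈ 𝒜^n and every α ∈ 𝒜, the number of indices i ∈ [n] with F(a^n)_i = α equals t_α, and the number of indices with F(a^n)_i = φ equals t̄; (ii) for all a^n, a'^n ∈ 𝒜^n and every i ∈ [n], if a_j = a'_j for all j ≤ i, then F(a^n)_j = F(a'^n)_j for all j ≤ i; (iii) if a^n satisfies |{i ∈ [n] : a_i = α}| ≥ t_α for every α ∈ 𝒜, then F(a^n)_i ∈ {a_i, φ} for every i ∈ [n]. -/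
open scoped Classical BigOperators
open Finset Filter

noncomputable section

/-!
Process the input from left to right, keeping the remaining quota `q : Option A → ℕ` of every
output symbol, initially `t α` for `some α` and `t̄` for `φ = none`. At each position output the
input letter if its quota is positive, otherwise `φ` if its quota is positive, otherwise any
symbol of positive quota, and decrement that quota. The quotas always sum to the number of
remaining positions, so some quota is positive at every step and all of them are used up at the
end: this gives (i), and (ii) holds because the scan is online. If every letter `α` occurs at
least `t α` times, then `q (some α)` never exceeds the number of remaining occurrences of `α`;
when the quota of the current letter is exhausted, the letter quotas therefore sum to less than
the number of remaining positions, so the quota of `φ` is positive and the third branch is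
never taken, which gives (iii).
-/

theorem sub_single_add_single {ι : Type*} [DecidableEq ι] {q : ι → ℕ} {o : ι} (h : 0 < q o) :
    q - Pi.single o 1 + Pi.single o 1 = q :=
  tsub_add_cancel_of_le fun o' => by
    rw [Pi.single_apply]
    split_ifs with ho
    · exact ho ▸ h
    · exact Nat.zero_le _

theorem sum_sub_single_add_one {ι : Type*} [Fintype ι] [DecidableEq ι] {q : ι → ℕ} {o : ι} (h : 0 < q o) :
    ∑ o', (q - Pi.single o 1 : ι → ℕ) o' + 1 = ∑ o', q o' := by
  conv_rhs => rw [← sub_single_add_single h]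
  simp [Finset.sum_add_distrib]

theorem sum_count_eq_length {ι : Type*} [Fintype ι] (l : List ι) :
    ∑ i, l.count i = l.length := by
  rw [← List.sum_toFinset_count_eq_length]
  exact (Finset.sum_subset (subset_univ _) fun i _ h => List.count_eq_zero.2 (by simpa using h)).symm

theorem card_filter_eq_count_ofFn {B : Type*} [DecidableEq B] [inst : BEq B] [LawfulBEq B]
    {n : ℕ} (f : Fin n → B) (b : B) : #{i | f i = b} = (List.ofFn f).count b := by
  rw [lawful_beq_subsingleton inst instBEqOfDecidableEq, ← Multiset.coe_count, ← Fin.univ_val_map,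
    Multiset.count_map]
  simp [Finset.card, Finset.filter_val, eq_comm]

theorem sum_floor_mul_le {A : Type*} [Fintype A] {P : A → ℝ} (hP : IsPMF P) {c : ℝ} {n : ℕ}
    (hc : c ≤ n) : ∑ α, ⌊c * P α⌋₊ ≤ n := by
  have : (∑ α, ⌊c * P α⌋₊ : ℝ) ≤ n :=
    calc (∑ α, ⌊c * P α⌋₊ : ℝ)
        ≤ ∑ α, (⌊n * P α⌋₊ : ℝ) := by
          gcongr with α
          exact hP.1 α
      _ ≤ ∑ α, n * P α := by
          gcongr with α
          exact Nat.floor_le (mul_nonneg n.cast_nonneg (hP.1 α))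
      _ = n := by rw [← mul_sum, hP.2, mul_one]
  exact_mod_cast this

section TypeFixing

variable {A : Type*}

def greedyStep (q : Option A → ℕ) (x : A) : Option A :=
  if 0 < q (some x) then some x
  else if 0 < q none then none
  else if h : ∃ o, 0 < q o then h.choose else none

def typeFixList (q : Option A → ℕ) : List A → List (Option A)
  | [] => []
  | x :: xs => greedyStep q x :: typeFixList (q - Pi.single (greedyStep q x) 1) xs

@[simp]
theorem length_typeFixList (q : Option A → ℕ) (l : List A) :
    (typeFixList q l).length = l.length := by
  induction l generalizing q with
  | nil => rfl
  | cons x xs ih => simp [typeFixList, ih]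

theorem typeFixList_take (q : Option A → ℕ) (l : List A) (k : ℕ) :
    typeFixList q (l.take k) = (typeFixList q l).take k := by
  induction l generalizing q k with
  | nil => simp [typeFixList]
  | cons x xs ih => cases k <;> simp [typeFixList, ih]

def typeFix (q : Option A → ℕ) {n : ℕ} (a : Fin n → A) (i : Fin n) : Option A :=
  (typeFixList q (List.ofFn a))[i]'(by simp)

theorem ofFn_typeFix (q : Option A → ℕ) {n : ℕ} (a : Fin n → A) :
    List.ofFn (typeFix q a) = typeFixList q (List.ofFn a) :=
  List.ext_getElem (by simp) fun _ _ _ => by simp [typeFix]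

theorem typeFix_eq_of_prefix_eq (q : Option A → ℕ) {n : ℕ} {a a' : Fin n → A} {i : Fin n}
    (h : ∀ j ≤ i, a j = a' j) {j : Fin n} (hj : j ≤ i) : typeFix q a j = typeFix q a' j := by
  have htake : (List.ofFn a).take (i + 1) = (List.ofFn a').take (i + 1) :=
    List.ext_getElem (by simp) fun m hm _ => by
      simp only [List.length_take, List.length_ofFn] at hm
      simpa using h ⟨m, by omega⟩ (Fin.mk_le_of_le_val (by omega))
  have := congrArg (fun l => (typeFixList q l)[(j : ℕ)]?) htake
  simpa [typeFixList_take, List.getElem?_take, Nat.lt_succ_of_le hj, typeFix] using this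

variable [Fintype A]

theorem greedyStep_pos {q : Option A → ℕ} (hq : 0 < ∑ o, q o) (x : A) :
    0 < q (greedyStep q x) := by
  unfold greedyStep
  split_ifs with hx hnone hex
  · exact hx
  · exact hnone
  · exact hex.choose_spec
  · exact absurd (Finset.sum_pos_iff.1 hq) (by simpa using hex)

theorem count_typeFixList {q : Option A → ℕ} {l : List A} (hq : ∑ o, q o = l.length)
    (o : Option A) : (typeFixList q l).count o = q o := by
  induction l generalizing q with
  | nil => simpa [typeFixList] using ((Finset.sum_eq_zero_iff.1 hq) o (mem_univ o)).symm
  | cons x xs ih =>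
    rw [List.length_cons] at hq
    have hpos := greedyStep_pos (q := q) (by omega) x
    have hsum := sum_sub_single_add_one hpos
    rw [typeFixList, List.count_cons, ih (by omega)]
    conv_rhs => rw [← sub_single_add_single hpos]
    by_cases ho : greedyStep q x = o <;> simp [ho]

theorem card_filter_typeFix {q : Option A → ℕ} {n : ℕ} (hq : ∑ o, q o = n) (a : Fin n → A)
    (o : Option A) : #{i | typeFix q a i = o} = q o := by
  rw [card_filter_eq_count_ofFn, ofFn_typeFix, count_typeFixList (by simp [hq])]

theorem greedyStep_eq_some_or_none {q : Option A → ℕ} {x : A} {xs : List A}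
    (hq : ∑ o, q o = (x :: xs).length) (hl : ∀ α, q (some α) ≤ (x :: xs).count α) :
    greedyStep q x = some x ∨ (greedyStep q x = none ∧ q (some x) = 0) := by
  have hnone : q (some x) = 0 → 0 < q none := fun hx => by
    have hlt : ∑ α, q (some α) < ∑ α, (x :: xs).count α :=
      Finset.sum_lt_sum (fun α _ => hl α) ⟨x, mem_univ x, by simp [hx]⟩
    rw [sum_count_eq_length, ← hq, Fintype.sum_option] at hlt
    omega
  unfold greedyStep
  split_ifs with hx hn
  · exact .inl rfl
  · exact .inr ⟨rfl, by omega⟩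
  all_goals exact absurd (hnone (by omega)) hn

theorem forall₂_typeFixList {q : Option A → ℕ} {l : List A} (hq : ∑ o, q o = l.length)
    (hl : ∀ α, q (some α) ≤ l.count α) :
    List.Forall₂ (fun x o => o = some x ∨ o = none) l (typeFixList q l) := by
  induction l generalizing q with
  | nil => exact .nil
  | cons x xs ih =>
    have hstep := greedyStep_eq_some_or_none hq hl
    rw [List.length_cons] at hq
    have hpos := greedyStep_pos (q := q) (by omega) x
    refine .cons (hstep.imp_right And.left) (ih ?_ fun α => ?_)
    · have := sum_sub_single_add_one hpos
      omega
    · have hα := hl α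
      rw [List.count_cons] at hα
      rcases hstep with h | ⟨h, hx⟩ <;> rw [h] <;> by_cases hxα : x = α <;> simp_all

theorem typeFix_eq_some_or_none {q : Option A → ℕ} {n : ℕ} (hq : ∑ o, q o = n) {a : Fin n → A}
    (ha : ∀ α, q (some α) ≤ #{i | a i = α}) (i : Fin n) :
    typeFix q a i = some (a i) ∨ typeFix q a i = none := by
  have h := forall₂_typeFixList (q := q) (l := List.ofFn a) (by simp [hq])
    fun α => card_filter_eq_count_ofFn a α ▸ ha α
  simpa [typeFix] using h.get (by simp) (by simp) (i := i)

end TypeFixing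

/-- The symbol `φ` is modelled by `none : Option A`. -/
theorem causal_type_fixing_map_exists_general {A : Type*} [Fintype A]
    (P : A → ℝ) (hP : IsPMF P) (ε : ℝ) (hε0 : 0 < ε) (n : ℕ) :
    ∃ F : (Fin n → A) → (Fin n → Option A),
      (∀ (a : Fin n → A) (α : A),
          (univ.filter fun i => F a i = some α).card = ⌊(n : ℝ) * (1 - ε) * P α⌋₊) ∧
      (∀ a : Fin n → A,
          (univ.filter fun i => F a i = none).card
            = n - ∑ α : A, ⌊(n : ℝ) * (1 - ε) * P α⌋₊) ∧
      (∀ a a' : Fin n → A, ∀ i : Fin n, (∀ j : Fin n, j ≤ i → a j = a' j) →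
          ∀ j : Fin n, j ≤ i → F a j = F a' j) ∧
      (∀ a : Fin n → A,
          (∀ α : A, ⌊(n : ℝ) * (1 - ε) * P α⌋₊ ≤ (univ.filter fun i => a i = α).card) →
          ∀ i : Fin n, F a i = some (a i) ∨ F a i = none) := by
  set t : A → ℕ := fun α => ⌊(n : ℝ) * (1 - ε) * P α⌋₊
  have ht : ∑ α, t α ≤ n :=
    sum_floor_mul_le hP (mul_le_of_le_one_right n.cast_nonneg (by linarith))
  let q : Option A → ℕ := fun o => o.elim (n - ∑ α, t α) t
  have hq : ∑ o, q o = n := by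
    rw [Fintype.sum_option]
    exact Nat.sub_add_cancel ht
  exact ⟨typeFix q, fun a α => card_filter_typeFix hq a (some α),
    fun a => card_filter_typeFix hq a none, fun _ _ _ h _ => typeFix_eq_of_prefix_eq q h,
    fun _ ha => typeFix_eq_some_or_none hq ha⟩

/-- Existence of a causal type-fixing map (Algorithm 1). The
symbol `φ` is modelled by `none : Option A`. With `t α = ⌊n(1-ε)P(α)⌋` and
`t̄ = n - Σ_α t α`: (i) every output sequence has exactly `t α` entries equal to
`some α` and `t̄` entries equal to `none`; (ii) the map is causal; (iii) if the
input has at least `t α` entries equal to `α` for every `α`, then every output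
entry is the corresponding input entry or `none`. -/
theorem causal_type_fixing_map_exists {A : Type*} [Fintype A] [Nonempty A]
    (P : A → ℝ) (hP : IsPMF P) (ε : ℝ) (hε0 : 0 < ε) (hε1 : ε < 1) (n : ℕ) :
    ∃ F : (Fin n → A) → (Fin n → Option A),
      (∀ (a : Fin n → A) (α : A),
          (univ.filter fun i => F a i = some α).card = ⌊(n : ℝ) * (1 - ε) * P α⌋₊) ∧
      (∀ a : Fin n → A,
          (univ.filter fun i => F a i = none).card
            = n - ∑ α : A, ⌊(n : ℝ) * (1 - ε) * P α⌋₊) ∧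
      (∀ a a' : Fin n → A, ∀ i : Fin n, (∀ j : Fin n, j ≤ i → a j = a' j) →
          ∀ j : Fin n, j ≤ i → F a j = F a' j) ∧
      (∀ a : Fin n → A,
          (∀ α : A, ⌊(n : ℝ) * (1 - ε) * P α⌋₊ ≤ (univ.filter fun i => a i = α).card) →
          ∀ i : Fin n, F a i = some (a i) ∨ F a i = none) :=
  causal_type_fixing_map_exists_general P hP ε hε0 n

end
end
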